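/- Define Ψ : Ω₂ → ℝ² by Ψ(a,b) = (b, (2+√2)·b·⌊(1+a)/((2+√2)b)⌋ − a). Then Ψ is injective on Ω₂, Ψ maps Ω₂ into Ω₁, and Ψ preserves two-dimensional Lebesgue measure: for every Lebesgue-measurable set A ⊆ Ω₂, the measure of Ψ(A) equals the measure of A. (Ψ is the branch T_{Ω₂} of the return map of the horocycle flow, mapping Ω₂ into Ω₁.) -/

import Mathlib

open Real MeasureTheory Set

noncomputable section

/-- The region Ω₁ = {(a,b) : 0 < a ≤ 1, 1 − (2+√2)a < b ≤ 1}. -/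
def Ω₁ : Set (ℝ × ℝ) :=
  {p | 0 < p.1 ∧ p.1 ≤ 1 ∧ 1 - (2 + Real.sqrt 2) * p.1 < p.2 ∧ p.2 ≤ 1}

/-- The region Ω₂ = {(a,b) : 0 < a ≤ 1, 1 − a < b ≤ 1}. -/
def Ω₂ : Set (ℝ × ℝ) := {p | 0 < p.1 ∧ p.1 ≤ 1 ∧ 1 - p.1 < p.2 ∧ p.2 ≤ 1}

/-- The branch T_{Ω₂} of the return map: Ψ(a,b) = (b, (2+√2)b·⌊(1+a)/((2+√2)b)⌋ − a). -/
def Ψ (p : ℝ × ℝ) : ℝ × ℝ :=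
  (p.2, (2 + Real.sqrt 2) * p.2 * (⌊(1 + p.1) / ((2 + Real.sqrt 2) * p.2)⌋ : ℤ) - p.1)

/-!
On the horizontal slice at height `b`, `Ψ` sends `a` to `-a` reduced modulo `(2+√2)b` into the
window `(1 - (2+√2)b, 1]`. For `(a, b) ∈ Ω₂` the coordinate `a` ranges over `(1 - b, 1]`, an interval
shorter than the period, so this is injective and lands in `Ω₁`. On each level set of the floor,
`Ψ` is the unimodular linear map `(a, b) ↦ (b, kb - a)`; an injective map which is piecewise,
on countably many measurable pieces, a measure-preserving embedding preserves measure.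
-/

theorem eq_of_toIocMod_eq_of_mem_Ico {α : Type*} [AddCommGroup α] [LinearOrder α]
    [IsOrderedAddMonoid α] [Archimedean α] {p : α} (hp : 0 < p) {s t a b : α}
    (h : toIocMod hp s a = toIocMod hp s b) (ha : a ∈ Ico t (t + p)) (hb : b ∈ Ico t (t + p)) :
    a = b := by
  rw [← (toIcoMod_eq_self hp).2 ha, ← (toIcoMod_eq_self hp (a := t)).2 hb]
  exact (toIcoMod_eq_toIcoMod hp).2 ((toIocMod_eq_toIocMod hp).1 h)

theorem mul_floor_div_sub_eq_toIocMod {α : Type*} [Field α] [LinearOrder α]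
    [IsStrictOrderedRing α] [FloorRing α] {p : α} (hp : 0 < p) (t x : α) :
    p * ⌊(t + x) / p⌋ - x = toIocMod hp (t - p) (-x) := by
  rw [toIocMod_eq_sub_fract_mul, sub_add_cancel, sub_neg_eq_add, Int.fract, sub_mul,
    div_mul_cancel₀ _ hp.ne']
  ring

section PiecewiseMeasurePreserving

open Function

variable {α β ι : Type*} [MeasurableSpace α] [MeasurableSpace β] [MeasurableSpace ι] [Countable ι]
  [MeasurableSingletonClass ι] {μ : Measure α} {ν : Measure β}

theorem measure_image_eq_of_injOn_of_piecewise {f : α → β} {F : α → ι} {g : ι → α → β}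
    (hF : Measurable F) (hg : ∀ i, MeasurableEmbedding (g i))
    (hgμ : ∀ i, MeasurePreserving (g i) μ ν) (hfg : ∀ x, f x = g (F x) x)
    {A : Set α} (hA : MeasurableSet A) (hf : InjOn f A) : ν (f '' A) = μ A := by
  set B : ι → Set α := fun i => A ∩ F ⁻¹' {i}
  have hBm : ∀ i, MeasurableSet (B i) := fun i => hA.inter (hF (measurableSet_singleton i))
  have hAB : A = ⋃ i, B i := by ext x; simp [B]
  have hfB : ∀ i, f '' B i = g i '' B i := fun i =>
    image_congr fun x hx => by rw [hfg, show F x = i from hx.2]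
  have hBd : Pairwise (Disjoint on B) := fun i j hij =>
    disjoint_left.2 fun x hi hj => hij (hi.2.symm.trans hj.2)
  have hfBd : Pairwise (Disjoint on fun i => f '' B i) := fun i j hij =>
    (hBd hij).image hf inter_subset_left inter_subset_left
  calc ν (f '' A) = ν (⋃ i, g i '' B i) := by rw [hAB, image_iUnion, iUnion_congr hfB]
    _ = ∑' i, μ (B i) := by
      rw [measure_iUnion (by simpa only [hfB] using hfBd)
        fun i => (hg i).measurableSet_image.2 (hBm i)]
      refine tsum_congr fun i => ?_
      rw [← (hgμ i).measure_preimage_emb (hg i), (hg i).injective.preimage_image]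
    _ = μ A := by rw [← measure_iUnion hBd hBm, ← hAB]

end PiecewiseMeasurePreserving

def swapShear (k : ℝ) : (ℝ × ℝ) ≃ᵐ (ℝ × ℝ) where
  toFun p := (p.2, k * p.2 - p.1)
  invFun q := (k * q.1 - q.2, q.1)
  left_inv p := by simp
  right_inv q := by simp
  measurable_toFun := by simp only [Equiv.coe_fn_mk]; fun_prop
  measurable_invFun := by simp only [Equiv.coe_fn_symm_mk]; fun_prop

theorem measurePreserving_swapShear (k : ℝ) : MeasurePreserving (swapShear k) := by
  have hshear : MeasurePreserving (fun p : ℝ × ℝ => (p.1, k * p.1 - p.2)) := by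
    rw [Measure.volume_eq_prod]
    exact (MeasurePreserving.id volume).skew_product (g := fun x y => k * x - y) (by fun_prop)
      (ae_of_all _ fun x => (Measure.measurePreserving_sub_left volume (k * x)).map_eq)
  have hswap : MeasurePreserving (Prod.swap : ℝ × ℝ → ℝ × ℝ) := by
    rw [Measure.volume_eq_prod]
    exact Measure.measurePreserving_swap
  exact hshear.comp hswap

theorem one_lt_two_add_sqrt_two : 1 < 2 + √2 := by
  linarith [Real.sqrt_nonneg 2]

theorem Ψ_eq_swapShear (p : ℝ × ℝ) :
    Ψ p = swapShear ((2 + √2) * ⌊(1 + p.1) / ((2 + √2) * p.2)⌋) p := by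
  simp only [Ψ, swapShear, MeasurableEquiv.coe_mk, Equiv.coe_fn_mk, Prod.mk.injEq, true_and]
  ring

theorem two_add_sqrt_two_mul_pos {b : ℝ} (hb : 0 < b) : 0 < (2 + √2) * b :=
  mul_pos (one_pos.trans one_lt_two_add_sqrt_two) hb

theorem Ψ_eq_toIocMod {p : ℝ × ℝ} (hb : 0 < p.2) :
    Ψ p = (p.2, toIocMod (two_add_sqrt_two_mul_pos hb) (1 - (2 + √2) * p.2) (-p.1)) := by
  rw [Ψ, mul_floor_div_sub_eq_toIocMod (two_add_sqrt_two_mul_pos hb)]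

theorem mapsTo_Ψ : MapsTo Ψ Ω₂ Ω₁ := by
  rintro ⟨a, b⟩ ⟨ha₀, ha₁, hab, hb₁⟩
  dsimp only at ha₀ ha₁ hab hb₁
  have hb₀ : 0 < b := by linarith
  obtain ⟨hlo, hhi⟩ := toIocMod_mem_Ioc (two_add_sqrt_two_mul_pos hb₀) (1 - (2 + √2) * b) (-a)
  rw [Ψ_eq_toIocMod hb₀]
  exact ⟨hb₀, hb₁, hlo, by linarith⟩

theorem injOn_Ψ : InjOn Ψ Ω₂ := by
  rintro ⟨a, b⟩ ⟨ha₀, ha₁, hab, hb₁⟩ ⟨a', b'⟩ ⟨ha₀', ha₁', hab', hb₁'⟩ h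
  dsimp only at ha₀ ha₁ hab hb₁ ha₀' ha₁' hab' hb₁'
  obtain rfl : b = b' := congrArg Prod.fst h
  have hb₀ : 0 < b := by linarith
  have hcb : b < (2 + √2) * b := by nlinarith [one_lt_two_add_sqrt_two]
  rw [Ψ_eq_toIocMod hb₀, Ψ_eq_toIocMod hb₀, Prod.mk.injEq] at h
  have hneg : -a = -a' := eq_of_toIocMod_eq_of_mem_Ico _ h.2 (t := -1)
    ⟨by linarith, by linarith⟩ ⟨by linarith, by linarith⟩
  rw [neg_inj.1 hneg]

/-- Ψ is injective on Ω₂, maps Ω₂ into Ω₁, and preserves two-dimensional Lebesgue measure. -/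
theorem T_Omega2_injective_measure_preserving :
    Set.InjOn Ψ Ω₂ ∧ Set.MapsTo Ψ Ω₂ Ω₁ ∧
    ∀ A : Set (ℝ × ℝ), A ⊆ Ω₂ → MeasurableSet A → volume (Ψ '' A) = volume A :=
  ⟨injOn_Ψ, mapsTo_Ψ, fun _ hA hAm =>
    measure_image_eq_of_injOn_of_piecewise (g := fun n : ℤ => swapShear ((2 + √2) * n))
      (by fun_prop) (fun _ => (swapShear _).measurableEmbedding)
      (fun _ => measurePreserving_swapShear _) Ψ_eq_swapShear hAm (injOn_Ψ.mono hA)⟩
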